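/- arXiv:0708.1596 — 6 statements merged into one kernel-verified Lean document; each statement's English description precedes it below -/
import Mathlib

section
/- Let A be the matrix with rows (1,−2,2), (2,−1,2), (2,−2,3). If (x,y,z) is a primitive Pythagorean triple (positive integers with x²+y²=z², gcd(x,y,z)=1), then A·(x,y,z)ᵀ is also a primitive Pythagorean triple. -/
/-! The matrix `A` is an integral automorphism of the Lorentz form `x² + y² - z²`: it preserves the
form, and its inverse `[[1, 2, -2], [-2, -1, 2], [-2, -2, 3]]` again has integer entries, so `A`
preserves the gcd of a triple. The image is positive because its entries are
`x + 2(z - y)`, `2x + z + (z - y)` and `2x + z + 2(z - y)`, and `y < z`. -/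

section PythagoreanTransform

variable {R : Type*} [CommRing R]

theorem pythagoreanForm_transform (x y z : R) :
    (x - 2 * y + 2 * z) ^ 2 + (2 * x - y + 2 * z) ^ 2 - (2 * x - 2 * y + 3 * z) ^ 2 =
      x ^ 2 + y ^ 2 - z ^ 2 := by
  ring

theorem dvd_transform_iff {d x y z : R} :
    (d ∣ x - 2 * y + 2 * z ∧ d ∣ 2 * x - y + 2 * z ∧ d ∣ 2 * x - 2 * y + 3 * z) ↔
      d ∣ x ∧ d ∣ y ∧ d ∣ z := by
  constructor
  · rintro ⟨⟨a, ha⟩, ⟨b, hb⟩, ⟨c, hc⟩⟩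
    exact ⟨⟨a + 2 * b - 2 * c, by linear_combination ha + 2 * hb - 2 * hc⟩,
      ⟨-2 * a - b + 2 * c, by linear_combination -2 * ha - hb + 2 * hc⟩,
      ⟨-2 * a - 2 * b + 3 * c, by linear_combination -2 * ha - 2 * hb + 3 * hc⟩⟩
  · rintro ⟨⟨a, rfl⟩, ⟨b, rfl⟩, ⟨c, rfl⟩⟩
    exact ⟨⟨a - 2 * b + 2 * c, by ring⟩, ⟨2 * a - b + 2 * c, by ring⟩,
      ⟨2 * a - 2 * b + 3 * c, by ring⟩⟩

end PythagoreanTransform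

theorem Int.dvd_gcd_gcd_iff {a b c : ℤ} {d : ℕ} :
    d ∣ Int.gcd (Int.gcd a b) c ↔ (d : ℤ) ∣ a ∧ (d : ℤ) ∣ b ∧ (d : ℤ) ∣ c := by
  rw [Int.dvd_gcd_iff, Int.natCast_dvd_natCast, Int.dvd_gcd_iff, and_assoc]

theorem gcd_gcd_transform (x y z : ℤ) :
    Int.gcd (Int.gcd (x - 2 * y + 2 * z) (2 * x - y + 2 * z)) (2 * x - 2 * y + 3 * z) =
      Int.gcd (Int.gcd x y) z := by
  apply Nat.dvd_antisymm
  · exact Int.dvd_gcd_gcd_iff.mpr (dvd_transform_iff.mp (Int.dvd_gcd_gcd_iff.mp dvd_rfl))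
  · exact Int.dvd_gcd_gcd_iff.mpr (dvd_transform_iff.mpr (Int.dvd_gcd_gcd_iff.mp dvd_rfl))

theorem lt_of_sq_add_sq_eq_sq {R : Type*} [CommRing R] [LinearOrder R] [IsStrictOrderedRing R]
    {x y z : R} (hx : 0 < x) (hz : 0 < z)
    (h : x ^ 2 + y ^ 2 = z ^ 2) : y < z := by
  nlinarith

theorem stmt_1_general (x y z : ℤ) (hx : 0 < x) (hz : 0 < z)
    (hpyth : x ^ 2 + y ^ 2 = z ^ 2) (hprim : Int.gcd (Int.gcd x y) z = 1) :
    0 < x - 2 * y + 2 * z ∧ 0 < 2 * x - y + 2 * z ∧ 0 < 2 * x - 2 * y + 3 * z ∧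
      (x - 2 * y + 2 * z) ^ 2 + (2 * x - y + 2 * z) ^ 2 = (2 * x - 2 * y + 3 * z) ^ 2 ∧
      Int.gcd (Int.gcd (x - 2 * y + 2 * z) (2 * x - y + 2 * z)) (2 * x - 2 * y + 3 * z) = 1 := by
  have hyz : y < z := lt_of_sq_add_sq_eq_sq hx hz hpyth
  refine ⟨by linarith, by linarith, by linarith, ?_, (gcd_gcd_transform x y z).trans hprim⟩
  linear_combination pythagoreanForm_transform x y z + hpyth

theorem stmt_1 (x y z : ℤ) (hx : 0 < x) (hy : 0 < y) (hz : 0 < z)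
    (hpyth : x ^ 2 + y ^ 2 = z ^ 2) (hprim : Int.gcd (Int.gcd x y) z = 1) :
    0 < x - 2 * y + 2 * z ∧ 0 < 2 * x - y + 2 * z ∧ 0 < 2 * x - 2 * y + 3 * z ∧
      (x - 2 * y + 2 * z) ^ 2 + (2 * x - y + 2 * z) ^ 2 = (2 * x - 2 * y + 3 * z) ^ 2 ∧
      Int.gcd (Int.gcd (x - 2 * y + 2 * z) (2 * x - y + 2 * z)) (2 * x - 2 * y + 3 * z) = 1 :=
  stmt_1_general x y z hx hz hpyth hprim
end

section
/- Let B be the matrix with rows (1,2,2), (2,1,2), (2,2,3). If (x,y,z) is a primitive Pythagorean triple, then B·(x,y,z)ᵀ is a primitive Pythagorean triple. -/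
/-!
The matrix `B` preserves the quadratic form `x² + y² - z²`, so it maps Pythagorean triples to
Pythagorean triples, and it has the integral inverse `[[1,2,-2],[2,1,-2],[-2,-2,3]]`, so every
common divisor of the image triple divides `x`, `y` and `z`.
-/

theorem barning_sq_add_sq_sub_sq {R : Type*} [CommRing R] (x y z : R) :
    (x + 2 * y + 2 * z) ^ 2 + (2 * x + y + 2 * z) ^ 2 - (2 * x + 2 * y + 3 * z) ^ 2 =
      x ^ 2 + y ^ 2 - z ^ 2 := by
  ring

theorem Int.gcd_gcd_dvd_add_add (a b c u v w : ℤ) :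
    (Int.gcd (Int.gcd a b) c : ℤ) ∣ u * a + v * b + w * c := by
  have ha : (Int.gcd (Int.gcd a b) c : ℤ) ∣ a := (Int.gcd_dvd_left _ _).trans (Int.gcd_dvd_left _ _)
  have hb : (Int.gcd (Int.gcd a b) c : ℤ) ∣ b := (Int.gcd_dvd_left _ _).trans (Int.gcd_dvd_right _ _)
  have hc : (Int.gcd (Int.gcd a b) c : ℤ) ∣ c := Int.gcd_dvd_right _ _
  exact dvd_add (dvd_add (ha.mul_left u) (hb.mul_left v)) (hc.mul_left w)

theorem barning_gcd_dvd_gcd (x y z : ℤ) :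
    Int.gcd (Int.gcd (x + 2 * y + 2 * z) (2 * x + y + 2 * z)) (2 * x + 2 * y + 3 * z) ∣
      Int.gcd (Int.gcd x y) z := by
  set a := x + 2 * y + 2 * z
  set b := 2 * x + y + 2 * z
  set c := 2 * x + 2 * y + 3 * z
  have hx : x = 1 * a + 2 * b + (-2) * c := by ring
  have hy : y = 2 * a + 1 * b + (-2) * c := by ring
  have hz : z = (-2) * a + (-2) * b + 3 * c := by ring
  have hd : (Int.gcd (Int.gcd a b) c : ℤ) ∣ Int.gcd (Int.gcd x y) z := by
    refine Int.dvd_coe_gcd (Int.dvd_coe_gcd ?_ ?_) ?_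
    · rw [hx]; exact Int.gcd_gcd_dvd_add_add ..
    · rw [hy]; exact Int.gcd_gcd_dvd_add_add ..
    · rw [hz]; exact Int.gcd_gcd_dvd_add_add ..
  exact_mod_cast hd

theorem stmt_2 (x y z : ℤ) (hx : 0 < x) (hy : 0 < y) (hz : 0 < z)
    (hpyth : x ^ 2 + y ^ 2 = z ^ 2) (hprim : Int.gcd (Int.gcd x y) z = 1) :
    0 < x + 2 * y + 2 * z ∧ 0 < 2 * x + y + 2 * z ∧ 0 < 2 * x + 2 * y + 3 * z ∧
      (x + 2 * y + 2 * z) ^ 2 + (2 * x + y + 2 * z) ^ 2 = (2 * x + 2 * y + 3 * z) ^ 2 ∧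
      Int.gcd (Int.gcd (x + 2 * y + 2 * z) (2 * x + y + 2 * z)) (2 * x + 2 * y + 3 * z) = 1 := by
  refine ⟨by linarith, by linarith, by linarith, ?_, ?_⟩
  · linear_combination barning_sq_add_sq_sub_sq x y z + hpyth
  · exact Nat.dvd_one.mp (hprim ▸ barning_gcd_dvd_gcd x y z)
end

section
/- For each positive integer k, define (p_k, t_k, q_k) recursively by (p₁,t₁,q₁) = (209,120,241) and (p_k, t_k, q_k) = (7p_{k−1} − 4t_{k−1} + 8q_{k−1}, 4p_{k−1} − t_{k−1} + 4q_{k−1}, 8p_{k−1} − 4t_{k−1} + 9q_{k−1}). Then for all k ≥ 1: p_k² + t_k² = q_k², p_k > t_k, t_k is even, and t_k = (q_k − 1)/2. -/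
/-!
The step matrix `[[7,-4,8],[4,-1,4],[8,-4,9]]` preserves the Lorentz form `p² + t² - q²`
and maps the plane `q = 2t + 1` into itself; it keeps the parity of `t`, and it maps the region
`0 ≤ t < p` of that plane into itself. All these properties hold for `(209, 120, 241)`, so they
hold along the whole orbit.
-/

structure IsEvenLegTriple (p t q : ℤ) : Prop where
  pythagorean : p ^ 2 + t ^ 2 = q ^ 2
  nonneg : 0 ≤ t
  lt : t < p
  two_dvd : 2 ∣ t
  two_mul_eq : 2 * t = q - 1

namespace IsEvenLegTriple

variable {p t q : ℤ}

theorem step (h : IsEvenLegTriple p t q) :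
    IsEvenLegTriple (7 * p - 4 * t + 8 * q) (4 * p - t + 4 * q) (8 * p - 4 * t + 9 * q) where
  pythagorean := by linear_combination h.pythagorean
  nonneg := by linarith [h.nonneg, h.lt, h.two_mul_eq]
  lt := by linarith [h.nonneg, h.lt, h.two_mul_eq]
  two_dvd := by have := h.two_dvd; omega
  two_mul_eq := by linear_combination h.two_mul_eq

end IsEvenLegTriple

theorem stmt_11 (p t q : ℕ → ℤ)
    (hp1 : p 1 = 209) (ht1 : t 1 = 120) (hq1 : q 1 = 241)
    (hrec : ∀ k ≥ 1, p (k + 1) = 7 * p k - 4 * t k + 8 * q k ∧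
      t (k + 1) = 4 * p k - t k + 4 * q k ∧
      q (k + 1) = 8 * p k - 4 * t k + 9 * q k) :
    ∀ k ≥ 1, p k ^ 2 + t k ^ 2 = q k ^ 2 ∧ t k < p k ∧ 2 ∣ t k ∧
      2 * t k = q k - 1 := by
  intro k hk
  have h : IsEvenLegTriple (p k) (t k) (q k) := by
    induction k, hk using Nat.le_induction with
    | base =>
      rw [hp1, ht1, hq1]
      constructor <;> norm_num
    | succ n hn ih =>
      obtain ⟨hp, ht, hq⟩ := hrec n hn
      rw [hp, ht, hq]
      exact ih.step
  exact ⟨h.pythagorean, h.lt, h.two_dvd, h.two_mul_eq⟩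
end

section
/- Let p, q be positive integers with p ≤ q, √(q²−p²) = (q−1)/2, and q ≥ 241. Then 1/((2+√3)q) − 2/((2+√3)q²) < |√3/2 − p/q| < 1/(2√3·q). -/
/-!
The relation `(q - 1)² = 4 (q² - p²)` says `4p² - 3q² = 2q - 1`, so after rationalising,
`p/q - √3/2 = (2q - 1) / (2q (2p + √3 q))`. Bounding the denominator above with `p ≤ q`
and below with `√3 q < 2p` gives the two inequalities.
-/

section SqrtThreeApprox

variable {x y : ℝ}

lemma le_of_sub_one_sq_eq (hx : 0 ≤ x) (hy : 0 < y) (h : (y - 1) ^ 2 = 4 * (y ^ 2 - x ^ 2)) :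
    x ≤ y := by
  nlinarith

lemma sqrt_three_mul_lt_two_mul_of_sub_one_sq_eq (hx : 0 ≤ x) (hy : 1 / 2 < y)
    (h : (y - 1) ^ 2 = 4 * (y ^ 2 - x ^ 2)) : √3 * y < 2 * x := by
  refine lt_of_pow_lt_pow_left₀ 2 (by positivity) ?_
  rw [mul_pow, Real.sq_sqrt (by norm_num : (0 : ℝ) ≤ 3)]
  nlinarith

lemma abs_sqrt_three_div_two_sub_div_eq (hx : 0 ≤ x) (hy : 1 / 2 < y)
    (h : (y - 1) ^ 2 = 4 * (y ^ 2 - x ^ 2)) :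
    |√3 / 2 - x / y| = (2 * y - 1) / (2 * y * (2 * x + √3 * y)) := by
  have hlt := sqrt_three_mul_lt_two_mul_of_sub_one_sq_eq hx hy h
  have hy0 : 0 < y := by linarith
  have hsum : 0 < 2 * x + √3 * y := by positivity
  have hneg : √3 / 2 - x / y < 0 := by
    rw [sub_neg, div_lt_div_iff₀ two_pos hy0]
    linarith
  rw [abs_of_neg hneg, eq_div_iff (by positivity)]
  field_simp
  linear_combination h - y ^ 2 * Real.sq_sqrt (by norm_num : (0 : ℝ) ≤ 3)

lemma sub_div_lt_abs_sqrt_three_div_two_sub_div (hx : 0 ≤ x) (hy : 1 / 2 < y)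
    (h : (y - 1) ^ 2 = 4 * (y ^ 2 - x ^ 2)) :
    1 / ((2 + √3) * y) - 2 / ((2 + √3) * y ^ 2) < |√3 / 2 - x / y| := by
  have hy0 : 0 < y := by linarith
  have hxy := le_of_sub_one_sq_eq hx hy0 h
  rw [abs_sqrt_three_div_two_sub_div_eq hx hy h]
  calc 1 / ((2 + √3) * y) - 2 / ((2 + √3) * y ^ 2) = (2 * y - 4) / (2 * y * ((2 + √3) * y)) := by
        field_simp; ring
    _ < (2 * y - 1) / (2 * y * ((2 + √3) * y)) := by gcongr; linarith
    _ ≤ (2 * y - 1) / (2 * y * (2 * x + √3 * y)) := by gcongr <;> linarith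

lemma abs_sqrt_three_div_two_sub_div_lt (hx : 0 ≤ x) (hy : 1 / 2 < y)
    (h : (y - 1) ^ 2 = 4 * (y ^ 2 - x ^ 2)) :
    |√3 / 2 - x / y| < 1 / (2 * √3 * y) := by
  have hlt := sqrt_three_mul_lt_two_mul_of_sub_one_sq_eq hx hy h
  rw [abs_sqrt_three_div_two_sub_div_eq hx hy h, div_lt_div_iff₀ (by positivity) (by positivity)]
  nlinarith [Real.sqrt_pos.2 (by norm_num : (0 : ℝ) < 3)]

end SqrtThreeApprox

theorem stmt_12_general (p q : ℕ) (hq : 241 ≤ q)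
    (ht : ((q : ℤ) - 1) ^ 2 = 4 * ((q : ℤ) ^ 2 - (p : ℤ) ^ 2)) :
    1 / ((2 + Real.sqrt 3) * q) - 2 / ((2 + Real.sqrt 3) * q ^ 2) <
        |Real.sqrt 3 / 2 - (p : ℝ) / q| ∧
      |Real.sqrt 3 / 2 - (p : ℝ) / q| < 1 / (2 * Real.sqrt 3 * q) := by
  have hq' : (1 / 2 : ℝ) < q := by
    have : (241 : ℝ) ≤ q := by exact_mod_cast hq
    linarith
  have ht' : ((q : ℝ) - 1) ^ 2 = 4 * ((q : ℝ) ^ 2 - (p : ℝ) ^ 2) := by exact_mod_cast ht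
  exact ⟨sub_div_lt_abs_sqrt_three_div_two_sub_div p.cast_nonneg hq' ht',
    abs_sqrt_three_div_two_sub_div_lt p.cast_nonneg hq' ht'⟩

theorem stmt_12 (p q : ℕ) (hp : 0 < p) (hpq : p ≤ q) (hq : 241 ≤ q)
    (ht : ((q : ℤ) - 1) ^ 2 = 4 * ((q : ℤ) ^ 2 - (p : ℤ) ^ 2)) :
    1 / ((2 + Real.sqrt 3) * q) - 2 / ((2 + Real.sqrt 3) * q ^ 2) <
        |Real.sqrt 3 / 2 - (p : ℝ) / q| ∧
      |Real.sqrt 3 / 2 - (p : ℝ) / q| < 1 / (2 * Real.sqrt 3 * q) :=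
  stmt_12_general p q hq ht
end

section
/- Define q_k recursively by q₁ = 241 and q_{k+1} = 8p_k − 4t_k + 9q_k where (p_k,t_k,q_k) follows the recursion (p₁,t₁,q₁)=(209,120,241), p_{k+1} = 7p_k − 4t_k + 8q_k, t_{k+1} = 4p_k − t_k + 4q_k. Then for all k ≥ 1, 241·(7+4√3)^{k−1} < q_k (with equality allowed at k=1) and q_k < 241·(13.947)^{k−1}. -/
/-!
Write `q = 2t + 1`. The relation `p² + t² = q²` then reads `16p² = 12q² + 8q - 4`, and the
recursion gives `q_{k+1} = 8p_k + 7q_k + 2`. Since `4p_k ≥ 2√3 q_k`, this is at least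
`(7 + 4√3) q_k`; and since `8p_k + 2 ≤ 6.947 q_k` as soon as `q_k ≥ 229`, it is at most
`13.947 q_k`. The recursion matrix preserves `p² + t² - q²` and `q - 2t`, and `q_k` increases
from `q_1 = 241`, so both one-step ratio bounds hold at every step and iterate to the claim.
-/

open Real

structure IsHalfLegTriple (p t q : ℤ) : Prop where
  pythagoreanTriple : PythagoreanTriple p t q
  hypotenuse_eq : q = 2 * t + 1
  leg_nonneg : 0 ≤ p
  hypotenuse_nonneg : 0 ≤ q

namespace IsHalfLegTriple

variable {p t q : ℤ}

theorem step (h : IsHalfLegTriple p t q) :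
    IsHalfLegTriple (7 * p - 4 * t + 8 * q) (4 * p - t + 4 * q) (8 * p - 4 * t + 9 * q) where
  pythagoreanTriple := by
    have := h.pythagoreanTriple
    unfold PythagoreanTriple at this ⊢
    linear_combination this
  hypotenuse_eq := by linear_combination h.hypotenuse_eq
  leg_nonneg := by linarith [h.hypotenuse_eq, h.leg_nonneg, h.hypotenuse_nonneg]
  hypotenuse_nonneg := by linarith [h.hypotenuse_eq, h.leg_nonneg, h.hypotenuse_nonneg]

theorem le_step (h : IsHalfLegTriple p t q) : q ≤ 8 * p - 4 * t + 9 * q := by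
  linarith [h.hypotenuse_eq, h.leg_nonneg, h.hypotenuse_nonneg]

theorem sixteen_mul_leg_sq (h : IsHalfLegTriple p t q) :
    16 * (p : ℝ) ^ 2 = 12 * q ^ 2 + 8 * q - 4 := by
  have hpyth : (p : ℝ) * p + t * t = q * q := by exact_mod_cast h.pythagoreanTriple
  have hq : (q : ℝ) = 2 * t + 1 := by exact_mod_cast h.hypotenuse_eq
  rw [hq] at hpyth ⊢
  linear_combination 16 * hpyth

theorem mul_le_step (h : IsHalfLegTriple p t q) (hq : 1 ≤ q) :
    (7 + 4 * √3) * (q : ℝ) ≤ ((8 * p - 4 * t + 9 * q : ℤ) : ℝ) := by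
  have hq' : (1 : ℝ) ≤ q := by exact_mod_cast hq
  have hp : (0 : ℝ) ≤ p := by exact_mod_cast h.leg_nonneg
  have hqt : (q : ℝ) = 2 * t + 1 := by exact_mod_cast h.hypotenuse_eq
  have hleg : 2 * √3 * q ≤ 4 * (p : ℝ) := by
    refine (pow_le_pow_iff_left₀ (by positivity) (by positivity) two_ne_zero).mp ?_
    rw [mul_pow, mul_pow, sq_sqrt zero_le_three]
    linarith [h.sixteen_mul_leg_sq]
  push_cast
  linarith

theorem step_le_mul (h : IsHalfLegTriple p t q) (hq : 241 ≤ q) :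
    ((8 * p - 4 * t + 9 * q : ℤ) : ℝ) ≤ 13.947 * q := by
  have hq' : (241 : ℝ) ≤ q := by exact_mod_cast hq
  have hp : (0 : ℝ) ≤ p := by exact_mod_cast h.leg_nonneg
  have hqt : (q : ℝ) = 2 * t + 1 := by exact_mod_cast h.hypotenuse_eq
  have hleg : 8 * (p : ℝ) ≤ 6.947 * q - 2 := by
    refine (pow_le_pow_iff_left₀ (by positivity) (by linarith) two_ne_zero).mp ?_
    nlinarith [h.sixteen_mul_leg_sq]
  push_cast
  linarith

end IsHalfLegTriple

theorem stmt_13 (p t q : ℕ → ℤ)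
    (hp1 : p 1 = 209) (ht1 : t 1 = 120) (hq1 : q 1 = 241)
    (hrec : ∀ k ≥ 1, p (k + 1) = 7 * p k - 4 * t k + 8 * q k ∧
      t (k + 1) = 4 * p k - t k + 4 * q k ∧
      q (k + 1) = 8 * p k - 4 * t k + 9 * q k) :
    ∀ k ≥ 1, 241 * (7 + 4 * Real.sqrt 3) ^ (k - 1) ≤ (q k : ℝ) ∧
      (q k : ℝ) ≤ 241 * (13.947 : ℝ) ^ (k - 1) := by
  have hinv : ∀ k ≥ 1, IsHalfLegTriple (p k) (t k) (q k) ∧ 241 ≤ q k := by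
    refine Nat.le_induction ?_ fun k hk ⟨h, hq⟩ ↦ ?_
    · rw [hp1, ht1, hq1]
      exact ⟨⟨by unfold PythagoreanTriple; norm_num, by norm_num, by norm_num, by norm_num⟩, le_rfl⟩
    obtain ⟨hp', ht', hq'⟩ := hrec k hk
    rw [hp', ht', hq']
    exact ⟨h.step, hq.trans h.le_step⟩
  have hratio (j : ℕ) : (7 + 4 * √3) * (q (j + 1) : ℝ) ≤ q (j + 1 + 1) ∧
      (q (j + 1 + 1) : ℝ) ≤ 13.947 * q (j + 1) := by
    obtain ⟨h, hq⟩ := hinv (j + 1) (by omega)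
    rw [(hrec (j + 1) (by omega)).2.2]
    exact ⟨h.mul_le_step (by omega), h.step_le_mul hq⟩
  have hq1' : (q 1 : ℝ) = 241 := by exact_mod_cast hq1
  intro k hk
  obtain ⟨n, rfl⟩ : ∃ n, k = n + 1 := ⟨k - 1, by omega⟩
  rw [Nat.add_sub_cancel, mul_comm _ (_ ^ n), mul_comm _ (_ ^ n), ← hq1']
  exact ⟨geom_le (u := fun j ↦ (q (j + 1) : ℝ)) (by positivity) n fun j _ ↦ (hratio j).1,
    le_geom (u := fun j ↦ (q (j + 1) : ℝ)) (by norm_num) n fun j _ ↦ (hratio j).2⟩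
end

section
/- Let p, q be coprime positive integers with √3/2 < p/q < 1, q ≥ 13, and suppose q² − p² is a perfect square with √(q²−p²) ≤ q/2. Then p/q − √3/2 > 1/(3√3·q). -/
/-!
Multiplying by `6√3 q`, the claim becomes `9q + 2 < 6√3 p`, i.e.
`(9q + 2)² < 108 p² = 108 (q² - t²)`. Since `√3` is irrational, `2t = q` (which would force
`p² = 3t²`) is impossible, so `2t ≤ q - 1` and `108 t² ≤ 27 (q - 1)²`, which is more than enough.
-/
theorem Nat.eq_zero_of_sq_eq_mul_sq {a b n : ℕ} (hn : ¬IsSquare n) (h : a ^ 2 = n * b ^ 2) :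
    b = 0 := by
  by_contra hb
  refine hn (Rat.isSquare_natCast_iff.mp ⟨a / b, ?_⟩)
  field_simp
  exact_mod_cast h.symm

theorem two_mul_lt_of_sq_add_sq_eq_sq {p q t : ℕ} (hq : 0 < q) (ht : t ^ 2 + p ^ 2 = q ^ 2)
    (htq : 2 * t ≤ q) : 2 * t < q := by
  refine htq.lt_of_ne fun h => hq.ne' ?_
  have ht0 : t = 0 :=
    Nat.eq_zero_of_sq_eq_mul_sq Nat.prime_three.prime.not_isSquare (by subst h; linarith)
  omega

theorem sq_nine_mul_add_two_lt_of_two_mul_lt {p q t : ℕ} (hq : 2 ≤ q)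
    (ht : t ^ 2 + p ^ 2 = q ^ 2) (htq : 2 * t < q) : (9 * q + 2) ^ 2 < 108 * p ^ 2 := by
  have : 2 * t + 1 ≤ q := htq
  nlinarith

theorem one_div_lt_sub_sqrt_three_div_two {p q : ℝ} (hq : 0 < q) (hp : 0 ≤ p)
    (h : (9 * q + 2) ^ 2 < 108 * p ^ 2) :
    1 / (3 * √3 * q) < p / q - √3 / 2 := by
  have hs : √3 ^ 2 = 3 := Real.sq_sqrt (by norm_num)
  have hlt : 9 * q + 2 < 6 * √3 * p :=
    lt_of_pow_lt_pow_left₀ 2 (by positivity) (by rw [mul_pow, mul_pow, hs]; linarith)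
  rw [lt_sub_iff_add_lt, div_add_div _ _ (by positivity) two_ne_zero,
    div_lt_div_iff₀ (by positivity) hq]
  nlinarith [Real.sqrt_nonneg 3]

theorem stmt_14_general (p q t : ℕ) (hq13 : 13 ≤ q) (ht : t ^ 2 + p ^ 2 = q ^ 2) (htq : 2 * t ≤ q) :
    1 / (3 * Real.sqrt 3 * q) < (p : ℝ) / q - Real.sqrt 3 / 2 := by
  have h2t := two_mul_lt_of_sq_add_sq_eq_sq (by omega) ht htq
  have key := sq_nine_mul_add_two_lt_of_two_mul_lt (by omega) ht h2t
  exact one_div_lt_sub_sqrt_three_div_two (by positivity) (by positivity) (by exact_mod_cast key)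

theorem stmt_14 (p q t : ℕ) (hp : 0 < p) (hq : 0 < q) (hco : Nat.Coprime p q)
    (hlb : Real.sqrt 3 / 2 < (p : ℝ) / q) (hub : (p : ℝ) / q < 1)
    (hq13 : 13 ≤ q) (ht : t ^ 2 + p ^ 2 = q ^ 2) (htq : 2 * t ≤ q) :
    1 / (3 * Real.sqrt 3 * q) < (p : ℝ) / q - Real.sqrt 3 / 2 :=
  stmt_14_general p q t hq13 ht htq
end
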